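/- Let l ≥ 0 be an integer, σ ∈ ℂ with Re σ > 0, f₀ ∈ C^l(ℝ/2πℤ; ℂ), and let f be the σ-homogeneous function given in polar coordinates by f(r,θ) = r^σ f₀(θ). Assume μ(λ − σ − 1) ∉ ℤ. Then: (i) the ordinary differential equation p(θ)v′(θ) − i(σ+1−λ)q(θ)v(θ) = f₀(θ) has a unique 2π-periodic C¹ solution v, namely v(θ) = [K + ∫₀^θ (f₀(s)/p(s)) e^{−i(σ+1−λ)ψ(s)} ds]·e^{i(σ+1−λ)ψ(θ)} with K = (1 − e^{2πiμ(σ+1−λ)})^{-1} ∫₀^{2π} (f₀(s)/p(s)) e^{−i(σ+1−λ)ψ(s)} ds; (ii) v ∈ C^{l+1}, and the function u given in polar coordinates by u(r,θ) = r^{σ+1−λ} v(θ) is of class C^{l+1} on ℝ²∖{0} and satisfies Lu = f pointwise on ℝ²∖{0}; (iii) if Re σ > Re λ − 1, then u extends continuously (indeed Hölder-continuously) to 0 with value 0. -/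

import Mathlib

/-!
Write `k = i(σ + 1 - λ)`. Since `ψ' = q/p`, the equation `p v' - k q v = f₀` reads
`v' = k ψ' v + f₀/p`, which variation of constants solves by the stated `v`; it is `2π`-periodic
since `v(θ) = u(cos θ, sin θ)`. The difference `d` of two solutions satisfies `d' = k ψ' d`, so
`d(θ) = d(0) e^{k(ψ(θ) - ψ(0))}` with `ψ(2π) - ψ(0) = 2πμ`, and periodicity of `d` forces
`d(0)(e^{2πkμ} - 1) = 0`; nonresonance says exactly that `e^{2πkμ} ≠ 1`.

In polar coordinates the homogeneity of `A`, `B` gives `L = r^{λ-1} (p ∂_θ - i q r ∂_r)`, hence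
`L(r^{σ+1-λ} v(θ)) = r^σ (p v' - k q v) = r^σ f₀`. Near any `z₀ ≠ 0` the angle has the smooth branch
`arg z₀ + arg (z / z₀)`, which makes `u` as smooth as `v` off the origin, and
`|u(z)| ≤ sup |v| · |z|^{Re(σ+1-λ)}` since `v` is periodic and continuous.
-/

open Real Complex Set

noncomputable def variationOfConstants (h ψ : ℝ → ℂ) (k K : ℂ) (θ : ℝ) : ℂ :=
  (K + ∫ s in (0:ℝ)..θ, h s * Complex.exp (-k * ψ s)) * Complex.exp (k * ψ θ)

section LinearODE

variable {p q f ψ φ : ℝ → ℂ} {k : ℂ}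

theorem contDiff_succ_of_hasDerivAt {n : ℕ} (hψ : ∀ θ, HasDerivAt ψ (φ θ) θ)
    (hφ : ContDiff ℝ n φ) : ContDiff ℝ (n + 1) ψ := by
  rw [contDiff_succ_iff_deriv]
  refine ⟨fun θ => (hψ θ).differentiableAt, by simp, ?_⟩
  rwa [funext fun θ => (hψ θ).deriv]

theorem hasDerivAt_variationOfConstants {h : ℝ → ℂ} (K : ℂ) (hh : Continuous h)
    (hψ : ∀ θ, HasDerivAt ψ (φ θ) θ) (θ : ℝ) :
    HasDerivAt (variationOfConstants h ψ k K)
      (h θ + k * φ θ * variationOfConstants h ψ k K θ) θ := by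
  have hψc : Continuous ψ := continuous_iff_continuousAt.2 fun θ => (hψ θ).continuousAt
  have hg : Continuous fun s => h s * Complex.exp (-k * ψ s) := by fun_prop
  have hG := (hg.integral_hasStrictDerivAt 0 θ).hasDerivAt
  refine ((hG.const_add K).mul ((hψ θ).const_mul k).cexp).congr_deriv ?_
  rw [variationOfConstants, mul_assoc (h θ), ← Complex.exp_add, neg_mul, neg_add_cancel,
    Complex.exp_zero]
  ring

theorem contDiff_variationOfConstants {h : ℝ → ℂ} (K : ℂ) {n : ℕ} (hh : ContDiff ℝ n h)
    (hψ : ContDiff ℝ (n + 1) ψ) : ContDiff ℝ (n + 1) (variationOfConstants h ψ k K) := by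
  have hg : ContDiff ℝ n fun s => h s * Complex.exp (-k * ψ s) :=
    hh.mul (contDiff_const.mul (hψ.of_le (by norm_cast; omega))).cexp
  have hG : ContDiff ℝ (n + 1) fun θ => ∫ s in (0:ℝ)..θ, h s * Complex.exp (-k * ψ s) :=
    contDiff_succ_of_hasDerivAt
      (fun θ => (hg.continuous.integral_hasStrictDerivAt 0 θ).hasDerivAt) hg
  exact (contDiff_const.add hG).mul (contDiff_const.mul hψ).cexp

theorem variationOfConstants_solves_ode (K : ℂ) (hp : Continuous p) (hp0 : ∀ θ, p θ ≠ 0)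
    (hf : Continuous f) (hψ : ∀ θ, HasDerivAt ψ (q θ / p θ) θ) (θ : ℝ) :
    p θ * deriv (variationOfConstants (fun s => f s / p s) ψ k K) θ
      - k * q θ * variationOfConstants (fun s => f s / p s) ψ k K θ = f θ := by
  have hfp : Continuous fun s => f s / p s := hf.div hp hp0
  rw [(hasDerivAt_variationOfConstants K hfp hψ θ).deriv]
  field_simp [hp0 θ]
  ring

theorem eq_mul_cexp_of_hasDerivAt (hψ : ∀ θ, HasDerivAt ψ (φ θ) θ) {d : ℝ → ℂ}
    (hd : ∀ θ, HasDerivAt d (k * φ θ * d θ) θ) (θ : ℝ) :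
    d θ = d 0 * Complex.exp (k * (ψ θ - ψ 0)) := by
  have hE : ∀ s, HasDerivAt (fun s => d s * Complex.exp (-k * ψ s)) 0 s := by
    intro s
    refine ((hd s).mul ((hψ s).const_mul (-k)).cexp).congr_deriv ?_
    ring
  have hconst := is_const_of_deriv_eq_zero (fun s => (hE s).differentiableAt)
    (fun s => (hE s).deriv) θ 0
  calc d θ = d θ * Complex.exp (-k * ψ θ) * Complex.exp (k * ψ θ) := by
        rw [mul_assoc, ← Complex.exp_add]; simp
    _ = d 0 * Complex.exp (k * (ψ θ - ψ 0)) := by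
        rw [hconst, mul_assoc, ← Complex.exp_add]
        ring_nf

theorem eq_zero_of_periodic_of_hasDerivAt (hψ : ∀ θ, HasDerivAt ψ (φ θ) θ) {d : ℝ → ℂ}
    (hd : ∀ θ, HasDerivAt d (k * φ θ * d θ) θ) {T : ℝ} (hper : Function.Periodic d T)
    (hT : Complex.exp (k * (ψ T - ψ 0)) ≠ 1) : d = 0 := by
  have hd0 : d 0 = 0 := by
    have h := eq_mul_cexp_of_hasDerivAt hψ hd T
    rw [show d T = d 0 by simpa using hper 0] at h
    by_contra hne
    exact hT (mul_left_cancel₀ hne (by rw [← h, mul_one]))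
  funext θ
  rw [eq_mul_cexp_of_hasDerivAt hψ hd θ, hd0, zero_mul, Pi.zero_apply]

theorem eq_of_periodic_of_ode (hp0 : ∀ θ, p θ ≠ 0) (hψ : ∀ θ, HasDerivAt ψ (q θ / p θ) θ)
    {T : ℝ} (hT : Complex.exp (k * (ψ T - ψ 0)) ≠ 1) {w₁ w₂ : ℝ → ℂ}
    (hw₁ : Differentiable ℝ w₁) (hw₂ : Differentiable ℝ w₂)
    (hper₁ : Function.Periodic w₁ T) (hper₂ : Function.Periodic w₂ T)
    (hode₁ : ∀ θ, p θ * deriv w₁ θ - k * q θ * w₁ θ = f θ)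
    (hode₂ : ∀ θ, p θ * deriv w₂ θ - k * q θ * w₂ θ = f θ) : w₁ = w₂ := by
  refine sub_eq_zero.1 (eq_zero_of_periodic_of_hasDerivAt hψ (fun θ => ?_) (hper₁.sub hper₂) hT)
  refine ((hw₁ θ).hasDerivAt.sub (hw₂ θ).hasDerivAt).congr_deriv ?_
  field_simp [hp0 θ]
  simp only [Pi.sub_apply]
  linear_combination hode₁ θ - hode₂ θ

end LinearODE

theorem cexp_two_pi_I_mul_ne_one {x : ℂ} (hx : ¬∃ n : ℤ, x = n) :
    Complex.exp (2 * π * I * x) ≠ 1 := by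
  rw [Ne, Complex.exp_eq_one_iff]
  rintro ⟨n, hn⟩
  exact hx ⟨n, mul_left_cancel₀ two_pi_I_ne_zero (by rw [hn]; ring)⟩

section Polar

variable {E : Type*} [NormedAddCommGroup E] [NormedSpace ℝ E]

theorem cos_sin_ne_zero (θ : ℝ) : ((Real.cos θ, Real.sin θ) : ℝ × ℝ) ≠ 0 := by
  intro h
  have h1 : Real.cos θ = 0 := congrArg Prod.fst h
  have h2 : Real.sin θ = 0 := congrArg Prod.snd h
  simpa [h1, h2] using Real.sin_sq_add_cos_sq θ

theorem ContDiffOn.comp_cos_sin {n : WithTop ℕ∞} {A : ℝ × ℝ → E}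
    (hA : ContDiffOn ℝ n A {z | z ≠ 0}) : ContDiff ℝ n fun θ => A (Real.cos θ, Real.sin θ) :=
  hA.comp_contDiff (Real.contDiff_cos.prodMk Real.contDiff_sin) cos_sin_ne_zero

theorem exists_pos_eq_polar {z : ℝ × ℝ} (hz : z ≠ 0) :
    ∃ r θ : ℝ, 0 < r ∧ z = (r * Real.cos θ, r * Real.sin θ) := by
  have hζ : Complex.equivRealProd.symm z ≠ 0 := by
    simpa [Complex.ext_iff, Prod.ext_iff] using hz
  refine ⟨_, arg (Complex.equivRealProd.symm z), norm_pos_iff.2 hζ, ?_⟩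
  ext <;> simp [norm_mul_cos_arg, norm_mul_sin_arg]

-- The norm on `ℝ × ℝ` is the sup norm, hence the factor `2`.
theorem le_two_mul_norm_polar {r : ℝ} (hr : 0 ≤ r) (θ : ℝ) :
    r ≤ 2 * ‖((r * Real.cos θ, r * Real.sin θ) : ℝ × ℝ)‖ := by
  have h1 := norm_fst_le ((r * Real.cos θ, r * Real.sin θ) : ℝ × ℝ)
  have h2 := norm_snd_le ((r * Real.cos θ, r * Real.sin θ) : ℝ × ℝ)
  simp only [Real.norm_eq_abs] at h1 h2
  have hsq : r ^ 2 ≤ (2 * ‖((r * Real.cos θ, r * Real.sin θ) : ℝ × ℝ)‖) ^ 2 := by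
    nlinarith [sq_abs (r * Real.cos θ), sq_abs (r * Real.sin θ), Real.sin_sq_add_cos_sq θ,
      mul_self_le_mul_self (abs_nonneg _) h1, mul_self_le_mul_self (abs_nonneg _) h2]
  exact (pow_le_pow_iff_left₀ hr (by positivity) two_ne_zero).1 hsq

theorem arg_add_arg_div_coe_angle {ζ₀ ζ : ℂ} (h₀ : ζ₀ ≠ 0) (h : ζ ≠ 0) :
    ((arg ζ₀ + arg (ζ / ζ₀) : ℝ) : Real.Angle) = arg ζ := by
  rw [Real.Angle.coe_add, ← arg_mul_coe_angle h₀ (div_ne_zero h h₀), mul_div_cancel₀ _ h₀]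

theorem contDiffAt_arg_div {ζ₀ : ℂ} (h₀ : ζ₀ ≠ 0) {n : WithTop ℕ∞} :
    ContDiffAt ℝ n (fun ζ => arg (ζ / ζ₀)) ζ₀ := by
  have hslit : ζ₀ / ζ₀ ∈ slitPlane := by rw [div_self h₀]; exact one_mem_slitPlane
  have hlog : ContDiffAt ℝ n (fun ζ => log (ζ / ζ₀)) ζ₀ :=
    ((contDiffAt_log hslit).restrict_scalars ℝ).comp (f := fun ζ => ζ / ζ₀) ζ₀
      (contDiffAt_id.div_const ζ₀)
  have := imCLM.contDiff.contDiffAt.comp ζ₀ hlog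
  simpa [Function.comp_def, Complex.log_im] using this

theorem contDiffOn_of_polar {n : WithTop ℕ∞} {F : ℝ × ℝ → E} {u : ℝ × ℝ → E}
    (hF : ContDiffOn ℝ n F (Ioi 0 ×ˢ univ))
    (hu : ∀ r θ, 0 < r → u (r * Real.cos θ, r * Real.sin θ) = F (r, θ)) :
    ContDiffOn ℝ n u {z | z ≠ 0} := by
  intro z₀ hz₀
  set e := Complex.equivRealProdCLM.symm
  have he : ∀ w, w ≠ 0 → e w ≠ 0 := fun w hw => by simpa [e] using hw
  -- `arg (e z₀) + arg (e w / e z₀)` is a branch of the angle of `w` that is smooth near `z₀`.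
  set P : ℝ × ℝ → ℝ × ℝ := fun w => (‖e w‖, arg (e z₀) + arg (e w / e z₀))
  have hP : ContDiffAt ℝ n P z₀ :=
    ((contDiffAt_norm ℝ (he z₀ hz₀)).comp z₀ e.contDiff.contDiffAt).prodMk
      (contDiffAt_const.add ((contDiffAt_arg_div (he z₀ hz₀)).comp z₀ e.contDiff.contDiffAt))
  have hFP : ContDiffAt ℝ n F (P z₀) :=
    hF.contDiffAt ((isOpen_Ioi.prod isOpen_univ).mem_nhds ⟨norm_pos_iff.2 (he z₀ hz₀), trivial⟩)
  refine ((hFP.comp z₀ hP).congr_of_eventuallyEq ?_).contDiffWithinAt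
  filter_upwards [isOpen_ne.mem_nhds hz₀] with w hw
  have hangle := arg_add_arg_div_coe_angle (he z₀ hz₀) (he w hw)
  rw [Function.comp_apply, ← hu _ _ (norm_pos_iff.2 (he w hw))]
  congr 1
  ext
  · rw [← Real.Angle.cos_coe, hangle, Real.Angle.cos_coe, norm_mul_cos_arg]; simp [e]
  · rw [← Real.Angle.sin_coe, hangle, Real.Angle.sin_coe, norm_mul_sin_arg]; simp [e]

theorem fderiv_apply_eq_polar {u : ℝ × ℝ → E} {r θ : ℝ} (hr : r ≠ 0) {ur uθ : E}
    (hu : DifferentiableAt ℝ u (r * Real.cos θ, r * Real.sin θ))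
    (hur : HasDerivAt (fun t => u (t * Real.cos θ, t * Real.sin θ)) ur r)
    (huθ : HasDerivAt (fun s => u (r * Real.cos s, r * Real.sin s)) uθ θ) :
    fderiv ℝ u (r * Real.cos θ, r * Real.sin θ) (1, 0)
        = Real.cos θ • ur - (Real.sin θ / r) • uθ ∧
      fderiv ℝ u (r * Real.cos θ, r * Real.sin θ) (0, 1)
        = Real.sin θ • ur + (Real.cos θ / r) • uθ := by
  set D := fderiv ℝ u (r * Real.cos θ, r * Real.sin θ)
  have hDr : D (Real.cos θ, Real.sin θ) = ur :=
    (hu.hasFDerivAt.comp_hasDerivAt r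
      ((hasDerivAt_mul_const _).prodMk (hasDerivAt_mul_const _))).unique hur
  have hDθ : D (r * -Real.sin θ, r * Real.cos θ) = uθ :=
    (hu.hasFDerivAt.comp_hasDerivAt θ (((Real.hasDerivAt_cos θ).const_mul r).prodMk
      ((Real.hasDerivAt_sin θ).const_mul r))).unique huθ
  have hpyth := Real.sin_sq_add_cos_sq θ
  have e10 : ((1, 0) : ℝ × ℝ) = Real.cos θ • (Real.cos θ, Real.sin θ)
      - (Real.sin θ / r) • (r * -Real.sin θ, r * Real.cos θ) := by
    ext <;> simp only [Prod.smul_mk, smul_eq_mul, mul_neg, Prod.mk_sub_mk, sub_neg_eq_add] <;>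
      field_simp <;> linarith
  have e01 : ((0, 1) : ℝ × ℝ) = Real.sin θ • (Real.cos θ, Real.sin θ)
      + (Real.cos θ / r) • (r * -Real.sin θ, r * Real.cos θ) := by
    ext <;> simp only [Prod.smul_mk, smul_eq_mul, mul_neg, Prod.mk_add_mk] <;> field_simp <;>
      linarith
  constructor
  · rw [e10, map_sub, map_smul, map_smul, hDr, hDθ]
  · rw [e01, map_add, map_smul, map_smul, hDr, hDθ]

end Polar

def HasPolarForm (u : ℝ × ℝ → ℂ) (c : ℂ) (v : ℝ → ℂ) : Prop :=
  ∀ r θ, 0 < r → u (r * Real.cos θ, r * Real.sin θ) = Complex.exp (c * Real.log r) * v θ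

section PolarForm

variable {u : ℝ × ℝ → ℂ} {c : ℂ} {v : ℝ → ℂ}

theorem HasPolarForm.contDiffOn (hu : HasPolarForm u c v) {n : WithTop ℕ∞}
    (hv : ContDiff ℝ n v) : ContDiffOn ℝ n u {z | z ≠ 0} := by
  refine contDiffOn_of_polar (F := fun x => Complex.exp (c * Real.log x.1) * v x.2) ?_ hu
  have hlog : ContDiffOn ℝ n (fun x : ℝ × ℝ => Real.log x.1) (Ioi 0 ×ˢ univ) :=
    Real.contDiffOn_log.comp contDiff_fst.contDiffOn fun x hx => ne_of_gt hx.1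
  have hlog' : ContDiffOn ℝ n (fun x : ℝ × ℝ => ((Real.log x.1 : ℝ) : ℂ)) (Ioi 0 ×ˢ univ) :=
    ofRealCLM.contDiff.comp_contDiffOn hlog
  exact ((contDiffOn_const.mul hlog').cexp).mul (hv.comp contDiff_snd).contDiffOn

theorem HasPolarForm.periodic (hu : HasPolarForm u c v) : Function.Periodic v (2 * π) :=
  fun θ => by
  have h := hu 1 (θ + 2 * π) one_pos
  rw [Real.cos_add_two_pi, Real.sin_add_two_pi, hu 1 θ one_pos] at h
  simpa using h.symm

theorem HasPolarForm.hasDerivAt_radial (hu : HasPolarForm u c v) {r : ℝ} (hr : 0 < r) (θ : ℝ) :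
    HasDerivAt (fun t => u (t * Real.cos θ, t * Real.sin θ))
      (Complex.exp (c * Real.log r) * (c * (r : ℂ)⁻¹) * v θ) r := by
  have h := (((Real.hasDerivAt_log hr.ne').ofReal_comp.const_mul c).cexp).mul_const (v θ)
  refine (h.congr_of_eventuallyEq ?_).congr_deriv (by push_cast; ring)
  filter_upwards [Ioi_mem_nhds hr] with t ht using hu t θ ht

theorem HasPolarForm.hasDerivAt_angular (hu : HasPolarForm u c v) {r : ℝ} (hr : 0 < r) {θ : ℝ}
    {v' : ℂ} (hv : HasDerivAt v v' θ) :
    HasDerivAt (fun s => u (r * Real.cos s, r * Real.sin s))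
      (Complex.exp (c * Real.log r) * v') θ := by
  rw [funext fun s => hu r s hr]
  exact hv.const_mul _

theorem HasPolarForm.exists_norm_le_mul_rpow (hu : HasPolarForm u c v) (hc : 0 ≤ c.re)
    (hv : Bornology.IsBounded (range v)) :
    ∃ C, 0 < C ∧ ∀ z : ℝ × ℝ, z ≠ 0 → ‖u z‖ ≤ C * ‖z‖ ^ c.re := by
  obtain ⟨M, hM⟩ := isBounded_iff_forall_norm_le.1 hv
  refine ⟨max M 1 * 2 ^ c.re, by positivity, fun z hz => ?_⟩
  obtain ⟨r, θ, hr, rfl⟩ := exists_pos_eq_polar hz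
  have hnorm : ‖Complex.exp (c * Real.log r)‖ = r ^ c.re := by
    rw [Complex.norm_exp, Real.rpow_def_of_pos hr]
    simp [mul_comm]
  calc ‖u _‖ = r ^ c.re * ‖v θ‖ := by rw [hu r θ hr, norm_mul, hnorm]
    _ ≤ (2 * ‖((r * Real.cos θ, r * Real.sin θ) : ℝ × ℝ)‖) ^ c.re * max M 1 :=
      mul_le_mul (Real.rpow_le_rpow hr.le (le_two_mul_norm_polar hr.le θ) hc)
        ((hM _ (mem_range_self θ)).trans (le_max_left _ _)) (norm_nonneg _) (by positivity)
    _ = _ := by rw [Real.mul_rpow zero_le_two (norm_nonneg _)]; ring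

end PolarForm

theorem contDiff_polarCoeffs {n : WithTop ℕ∞} {A B : ℝ × ℝ → ℂ}
    (hA : ContDiffOn ℝ n A {z | z ≠ 0}) (hB : ContDiffOn ℝ n B {z | z ≠ 0}) {a b p q : ℝ → ℂ}
    (ha : ∀ θ : ℝ, a θ = A (Real.cos θ, Real.sin θ))
    (hb : ∀ θ : ℝ, b θ = B (Real.cos θ, Real.sin θ))
    (hpdef : ∀ θ : ℝ, p θ = b θ * (Real.cos θ : ℂ) - a θ * (Real.sin θ : ℂ))
    (hqdef : ∀ θ : ℝ, q θ = I * (a θ * (Real.cos θ : ℂ) + b θ * (Real.sin θ : ℂ))) :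
    ContDiff ℝ n p ∧ ContDiff ℝ n q := by
  have ha' : ContDiff ℝ n a := funext ha ▸ hA.comp_cos_sin
  have hb' : ContDiff ℝ n b := funext hb ▸ hB.comp_cos_sin
  have hcos : ContDiff ℝ n fun θ : ℝ => (Real.cos θ : ℂ) :=
    ofRealCLM.contDiff.comp Real.contDiff_cos
  have hsin : ContDiff ℝ n fun θ : ℝ => (Real.sin θ : ℂ) :=
    ofRealCLM.contDiff.comp Real.contDiff_sin
  exact ⟨by rw [funext hpdef]; fun_prop, by rw [funext hqdef]; fun_prop⟩

theorem homogeneous_vectorField_apply_polar {A B : ℝ × ℝ → ℂ} {lam : ℂ}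
    (hAh : ∀ t : ℝ, 0 < t → ∀ z : ℝ × ℝ, A (t • z) = (t : ℂ) ^ lam * A z)
    (hBh : ∀ t : ℝ, 0 < t → ∀ z : ℝ × ℝ, B (t • z) = (t : ℂ) ^ lam * B z)
    {u : ℝ × ℝ → ℂ} {r θ : ℝ} (hr : 0 < r) {ur uθ : ℂ}
    (hu : DifferentiableAt ℝ u (r * Real.cos θ, r * Real.sin θ))
    (hur : HasDerivAt (fun t => u (t * Real.cos θ, t * Real.sin θ)) ur r)
    (huθ : HasDerivAt (fun s => u (r * Real.cos s, r * Real.sin s)) uθ θ) :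
    A (r * Real.cos θ, r * Real.sin θ) * fderiv ℝ u (r * Real.cos θ, r * Real.sin θ) (1, 0)
      + B (r * Real.cos θ, r * Real.sin θ) * fderiv ℝ u (r * Real.cos θ, r * Real.sin θ) (0, 1)
    = Complex.exp ((lam - 1) * Real.log r) *
      ((B (Real.cos θ, Real.sin θ) * Real.cos θ - A (Real.cos θ, Real.sin θ) * Real.sin θ) * uθ
        + (A (Real.cos θ, Real.sin θ) * Real.cos θ + B (Real.cos θ, Real.sin θ) * Real.sin θ)
          * r * ur) := by
  obtain ⟨h10, h01⟩ := fderiv_apply_eq_polar hr.ne' hu hur huθ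
  have hz : ((r * Real.cos θ, r * Real.sin θ) : ℝ × ℝ) = r • (Real.cos θ, Real.sin θ) := by
    simp [Prod.smul_mk]
  have hpow : (r : ℂ) ^ lam = Complex.exp ((lam - 1) * Real.log r) * r := by
    rw [cpow_def_of_ne_zero (by exact_mod_cast hr.ne'), ← ofReal_log hr.le]
    nth_rw 3 [← Real.exp_log hr]
    rw [ofReal_exp, ← Complex.exp_add]
    ring_nf
  have hr' : (r : ℂ) ≠ 0 := by exact_mod_cast hr.ne'
  rw [h10, h01, hz, hAh r hr, hBh r hr, hpow]
  simp only [Complex.real_smul, ofReal_div]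
  field_simp
  ring

theorem homogeneous_vectorField_apply_of_polar {A B : ℝ × ℝ → ℂ} {lam : ℂ}
    (hAh : ∀ t : ℝ, 0 < t → ∀ z : ℝ × ℝ, A (t • z) = (t : ℂ) ^ lam * A z)
    (hBh : ∀ t : ℝ, 0 < t → ∀ z : ℝ × ℝ, B (t • z) = (t : ℂ) ^ lam * B z)
    {a b p q : ℝ → ℂ}
    (ha : ∀ θ : ℝ, a θ = A (Real.cos θ, Real.sin θ))
    (hb : ∀ θ : ℝ, b θ = B (Real.cos θ, Real.sin θ))
    (hpdef : ∀ θ : ℝ, p θ = b θ * (Real.cos θ : ℂ) - a θ * (Real.sin θ : ℂ))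
    (hqdef : ∀ θ : ℝ, q θ = I * (a θ * (Real.cos θ : ℂ) + b θ * (Real.sin θ : ℂ)))
    {u : ℝ × ℝ → ℂ} {c : ℂ} {v f₀ : ℝ → ℂ} (hu : HasPolarForm u c v) (hv : Differentiable ℝ v)
    (hode : ∀ θ, p θ * deriv v θ - I * c * q θ * v θ = f₀ θ)
    {r θ : ℝ} (hr : 0 < r) (hud : DifferentiableAt ℝ u (r * Real.cos θ, r * Real.sin θ)) :
    A (r * Real.cos θ, r * Real.sin θ) * fderiv ℝ u (r * Real.cos θ, r * Real.sin θ) (1, 0)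
      + B (r * Real.cos θ, r * Real.sin θ) * fderiv ℝ u (r * Real.cos θ, r * Real.sin θ) (0, 1)
    = Complex.exp ((lam - 1 + c) * Real.log r) * f₀ θ := by
  rw [homogeneous_vectorField_apply_polar hAh hBh hr hud (hu.hasDerivAt_radial hr θ)
    (hu.hasDerivAt_angular hr (hv θ).hasDerivAt), ← hode θ, hpdef, hqdef, ha, hb]
  have hexp : Complex.exp ((lam - 1 + c) * Real.log r)
      = Complex.exp ((lam - 1) * Real.log r) * Complex.exp (c * Real.log r) := by
    rw [← Complex.exp_add]; ring_nf
  have hr' : (r : ℂ) ≠ 0 := by exact_mod_cast hr.ne'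
  rw [hexp]
  field_simp
  ring_nf
  rw [I_sq]
  ring

theorem stmt_10_general
    (A B : ℝ × ℝ → ℂ) (lam : ℂ)
    (hA : ContDiffOn ℝ (⊤ : ℕ∞) A {z : ℝ × ℝ | z ≠ 0})
    (hB : ContDiffOn ℝ (⊤ : ℕ∞) B {z : ℝ × ℝ | z ≠ 0})
    (hAh : ∀ t : ℝ, 0 < t → ∀ z : ℝ × ℝ, A (t • z) = (t : ℂ) ^ lam * A z)
    (hBh : ∀ t : ℝ, 0 < t → ∀ z : ℝ × ℝ, B (t • z) = (t : ℂ) ^ lam * B z)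
    (a b p q : ℝ → ℂ)
    (ha : ∀ θ : ℝ, a θ = A (Real.cos θ, Real.sin θ))
    (hb : ∀ θ : ℝ, b θ = B (Real.cos θ, Real.sin θ))
    (hpdef : ∀ θ : ℝ, p θ = b θ * (Real.cos θ : ℂ) - a θ * (Real.sin θ : ℂ))
    (hqdef : ∀ θ : ℝ, q θ = Complex.I * (a θ * (Real.cos θ : ℂ) + b θ * (Real.sin θ : ℂ)))
    (hC2 : ∀ θ : ℝ, p θ ≠ 0)
    (mu : ℂ)
    (hmudef : mu = (1 / (2 * Real.pi)) * ∫ θ in (0:ℝ)..(2 * Real.pi), q θ / p θ)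
    (psi : ℝ → ℂ)
    (hpsider : ∀ θ : ℝ, HasDerivAt psi (q θ / p θ) θ)
    (l : ℕ) (sig : ℂ)
    (f₀ : ℝ → ℂ) (hf₀ : ContDiff ℝ (l : ℕ∞) f₀)
    (f : ℝ × ℝ → ℂ)
    (hf : ∀ r θ : ℝ, 0 < r → f (r * Real.cos θ, r * Real.sin θ) =
      Complex.exp (sig * (Real.log r : ℂ)) * f₀ θ)
    (hres : ¬ ∃ k : ℤ, mu * (lam - sig - 1) = (k : ℂ))
    (K : ℂ)
    (v : ℝ → ℂ)
    (hv : ∀ θ : ℝ, v θ =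
      (K + ∫ s in (0:ℝ)..θ, f₀ s / p s * Complex.exp (-(Complex.I * (sig + 1 - lam)) * psi s)) *
        Complex.exp (Complex.I * (sig + 1 - lam) * psi θ))
    (u : ℝ × ℝ → ℂ)
    (hu : ∀ r θ : ℝ, 0 < r → u (r * Real.cos θ, r * Real.sin θ) =
      Complex.exp ((sig + 1 - lam) * (Real.log r : ℂ)) * v θ) :
    -- (i) v is the unique 2π-periodic C¹ solution of p v' − i(σ+1−λ) q v = f₀
    (Function.Periodic v (2 * Real.pi) ∧ ContDiff ℝ 1 v ∧
      (∀ θ : ℝ, p θ * deriv v θ - Complex.I * (sig + 1 - lam) * q θ * v θ = f₀ θ) ∧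
      (∀ w : ℝ → ℂ, ContDiff ℝ 1 w → Function.Periodic w (2 * Real.pi) →
        (∀ θ : ℝ, p θ * deriv w θ - Complex.I * (sig + 1 - lam) * q θ * w θ = f₀ θ) →
        w = v)) ∧
    -- (ii) regularity and Lu = f on ℝ²∖{0}
    (ContDiff ℝ ((l : ℕ∞) + 1) v ∧
      ContDiffOn ℝ ((l : ℕ∞) + 1) u {z : ℝ × ℝ | z ≠ 0} ∧
      (∀ z : ℝ × ℝ, z ≠ 0 →
        A z * fderiv ℝ u z (1, 0) + B z * fderiv ℝ u z (0, 1) = f z)) ∧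
    -- (iii) Hölder continuity at 0 with value 0 when Re σ > Re λ − 1
    (lam.re - 1 < sig.re →
      ∃ C α : ℝ, 0 < C ∧ 0 < α ∧
        ∀ z : ℝ × ℝ, z ≠ 0 → ‖z‖ ≤ 1 → ‖u z‖ ≤ C * ‖z‖ ^ α) := by
  have hu_polar : HasPolarForm u (sig + 1 - lam) v := hu
  obtain ⟨hp, hq⟩ := contDiff_polarCoeffs hA hB ha hb hpdef hqdef
  have hqp : ContDiff ℝ (⊤ : ℕ∞) fun θ => q θ / p θ := by
    simp only [div_eq_mul_inv]; exact hq.mul (hp.inv hC2)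
  have hf₀p : ContDiff ℝ l fun θ => f₀ θ / p θ := by
    simp only [div_eq_mul_inv]; exact hf₀.mul ((hp.inv hC2).of_le (by exact_mod_cast le_top))
  have hψ : ContDiff ℝ (l + 1) psi :=
    contDiff_succ_of_hasDerivAt hpsider (hqp.of_le (by exact_mod_cast le_top))
  have hv_eq : v = variationOfConstants (fun s => f₀ s / p s) psi (I * (sig + 1 - lam)) K :=
    funext hv
  have hv_smooth : ContDiff ℝ (l + 1) v :=
    hv_eq ▸ contDiff_variationOfConstants K hf₀p hψ
  have hv_diff : Differentiable ℝ v := hv_smooth.differentiable (by simp)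
  have hv_ode : ∀ θ, p θ * deriv v θ - I * (sig + 1 - lam) * q θ * v θ = f₀ θ :=
    hv_eq ▸ variationOfConstants_solves_ode K hp.continuous hC2 hf₀.continuous hpsider
  have hv_per : Function.Periodic v (2 * π) := hu_polar.periodic
  have hres' : Complex.exp (I * (sig + 1 - lam) * (psi (2 * π) - psi 0)) ≠ 1 := by
    have hperiod : psi (2 * π) - psi 0 = 2 * π * mu := by
      rw [hmudef, ← intervalIntegral.integral_eq_sub_of_hasDerivAt (fun θ _ => hpsider θ)
        (hqp.continuous.intervalIntegrable _ _)]
      field_simp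
    rw [hperiod, show I * (sig + 1 - lam) * (2 * π * mu) = -(2 * π * I * (mu * (lam - sig - 1)))
      by ring, Complex.exp_neg, inv_ne_one]
    exact cexp_two_pi_I_mul_ne_one hres
  have hu_smooth : ContDiffOn ℝ ((l : ℕ∞) + 1) u {z | z ≠ 0} :=
    hu_polar.contDiffOn hv_smooth
  have hLu : ∀ z : ℝ × ℝ, z ≠ 0 →
      A z * fderiv ℝ u z (1, 0) + B z * fderiv ℝ u z (0, 1) = f z := by
    intro z hz
    obtain ⟨r, θ, hr, rfl⟩ := exists_pos_eq_polar hz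
    rw [homogeneous_vectorField_apply_of_polar hAh hBh ha hb hpdef hqdef hu_polar hv_diff hv_ode hr
      ((hu_smooth.differentiableOn (by simp)).differentiableAt (isOpen_ne.mem_nhds hz)), hf r θ hr]
    ring_nf
  refine ⟨⟨hv_per, hv_smooth.of_le (by simp), hv_ode, fun w hw hwper hwode =>
    eq_of_periodic_of_ode hC2 hpsider hres' (hw.differentiable one_ne_zero) hv_diff hwper hv_per
      hwode hv_ode⟩, ⟨hv_smooth, hu_smooth, hLu⟩, fun hσ => ?_⟩
  obtain ⟨C, hC, hbound⟩ := hu_polar.exists_norm_le_mul_rpow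
    (by simp only [sub_re, add_re, one_re]; linarith)
    (hv_per.isBounded_of_continuous two_pi_pos.ne' hv_smooth.continuous)
  exact ⟨C, _, hC, by simp only [sub_re, add_re, one_re]; linarith, fun z hz _ => hbound z hz⟩

/-- Equation Lu = f with f σ-homogeneous, f(r,θ) = r^σ f₀(θ), f₀ ∈ C^l, Re σ > 0,
under the nonresonance assumption μ(λ−σ−1) ∉ ℤ:
(i) the periodic ODE p v' − i(σ+1−λ) q v = f₀ has the stated unique 2π-periodic
C¹ solution v; (ii) v ∈ C^{l+1} and u = r^{σ+1−λ} v(θ) is C^{l+1} on ℝ²∖{0} and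
solves Lu = f there; (iii) if Re σ > Re λ − 1 then u is Hölder continuous at 0
with value 0. -/
theorem stmt_10
    (A B : ℝ × ℝ → ℂ) (lam : ℂ)
    (hA : ContDiffOn ℝ (⊤ : ℕ∞) A {z : ℝ × ℝ | z ≠ 0})
    (hB : ContDiffOn ℝ (⊤ : ℕ∞) B {z : ℝ × ℝ | z ≠ 0})
    (hlam : 1 < lam.re)
    (hAh : ∀ t : ℝ, 0 < t → ∀ z : ℝ × ℝ, A (t • z) = (t : ℂ) ^ lam * A z)
    (hBh : ∀ t : ℝ, 0 < t → ∀ z : ℝ × ℝ, B (t • z) = (t : ℂ) ^ lam * B z)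
    (a b p q : ℝ → ℂ)
    (ha : ∀ θ : ℝ, a θ = A (Real.cos θ, Real.sin θ))
    (hb : ∀ θ : ℝ, b θ = B (Real.cos θ, Real.sin θ))
    (hpdef : ∀ θ : ℝ, p θ = b θ * (Real.cos θ : ℂ) - a θ * (Real.sin θ : ℂ))
    (hqdef : ∀ θ : ℝ, q θ = Complex.I * (a θ * (Real.cos θ : ℂ) + b θ * (Real.sin θ : ℂ)))
    (hC1 : interior {θ : ℝ | (q θ * (starRingEnd ℂ) (p θ)).re = 0} = ∅)
    (hC2 : ∀ θ : ℝ, p θ ≠ 0)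
    (mu : ℂ)
    (hmudef : mu = (1 / (2 * Real.pi)) * ∫ θ in (0:ℝ)..(2 * Real.pi), q θ / p θ)
    (psi : ℝ → ℂ) (hpsi0 : psi 0 = 0)
    (hpsider : ∀ θ : ℝ, HasDerivAt psi (q θ / p θ) θ)
    (l : ℕ) (sig : ℂ) (hsig : 0 < sig.re)
    (f₀ : ℝ → ℂ) (hf₀ : ContDiff ℝ (l : ℕ∞) f₀) (hf₀per : Function.Periodic f₀ (2 * Real.pi))
    (f : ℝ × ℝ → ℂ)
    (hf : ∀ r θ : ℝ, 0 < r → f (r * Real.cos θ, r * Real.sin θ) =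
      Complex.exp (sig * (Real.log r : ℂ)) * f₀ θ)
    (hres : ¬ ∃ k : ℤ, mu * (lam - sig - 1) = (k : ℂ))
    (K : ℂ)
    (hK : K = (1 - Complex.exp (2 * Real.pi * Complex.I * mu * (sig + 1 - lam)))⁻¹ *
      ∫ s in (0:ℝ)..(2 * Real.pi), f₀ s / p s * Complex.exp (-(Complex.I * (sig + 1 - lam)) * psi s))
    (v : ℝ → ℂ)
    (hv : ∀ θ : ℝ, v θ =
      (K + ∫ s in (0:ℝ)..θ, f₀ s / p s * Complex.exp (-(Complex.I * (sig + 1 - lam)) * psi s)) *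
        Complex.exp (Complex.I * (sig + 1 - lam) * psi θ))
    (u : ℝ × ℝ → ℂ)
    (hu : ∀ r θ : ℝ, 0 < r → u (r * Real.cos θ, r * Real.sin θ) =
      Complex.exp ((sig + 1 - lam) * (Real.log r : ℂ)) * v θ) :
    -- (i) v is the unique 2π-periodic C¹ solution of p v' − i(σ+1−λ) q v = f₀
    (Function.Periodic v (2 * Real.pi) ∧ ContDiff ℝ 1 v ∧
      (∀ θ : ℝ, p θ * deriv v θ - Complex.I * (sig + 1 - lam) * q θ * v θ = f₀ θ) ∧
      (∀ w : ℝ → ℂ, ContDiff ℝ 1 w → Function.Periodic w (2 * Real.pi) →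
        (∀ θ : ℝ, p θ * deriv w θ - Complex.I * (sig + 1 - lam) * q θ * w θ = f₀ θ) →
        w = v)) ∧
    -- (ii) regularity and Lu = f on ℝ²∖{0}
    (ContDiff ℝ ((l : ℕ∞) + 1) v ∧
      ContDiffOn ℝ ((l : ℕ∞) + 1) u {z : ℝ × ℝ | z ≠ 0} ∧
      (∀ z : ℝ × ℝ, z ≠ 0 →
        A z * fderiv ℝ u z (1, 0) + B z * fderiv ℝ u z (0, 1) = f z)) ∧
    -- (iii) Hölder continuity at 0 with value 0 when Re σ > Re λ − 1
    (lam.re - 1 < sig.re →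
      ∃ C α : ℝ, 0 < C ∧ 0 < α ∧
        ∀ z : ℝ × ℝ, z ≠ 0 → ‖z‖ ≤ 1 → ‖u z‖ ≤ C * ‖z‖ ^ α) :=
  stmt_10_general A B lam hA hB hAh hBh a b p q ha hb hpdef hqdef hC2 mu hmudef psi hpsider l sig f₀
    hf₀ f hf hres K v hv u hu
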